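/- Let A be an m×n real matrix and ε = (ε_1,…,ε_{min{m,n}}) a sign pattern with ε_0 := 1. Suppose: (a) S^+(Ax) ≤ S^-(x) for all nonzero x ∈ ℝ^n, and (b) whenever Ax ≠ 0 and S^+(Ax) = S^-(x) = r with 0 ≤ r ≤ min{m,n}−1, the sign of the first component of Ax (using the sign from any maximizing completion if it is zero) equals ε_r ε_{r+1} times the sign of the first nonzero component of x. Then A is SSR(ε): every r×r minor of A is nonzero with sign ε_r. -/

import Mathlib

/-!
Induction on the order `r + 1` of the minor `det A[f; g]`. Let `x` be the vector supported on
the columns `g` whose entry at `g_k` is `(-1)^k` times the minor of `A` on the rows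
`f₁ < ⋯ < f_r` and the columns `g` without `g_k`. It has at most `r + 1` nonzero entries, so
`S⁻(x) ≤ r`, and by Laplace expansion `(A x)_i = det A[i, f₁, …, f_r; g]`, which vanishes on the
rows `f₁, …, f_r` and is the wanted minor at row `f₀`. Filling the zeros of a vector `y ≠ 0` with
suitable signs shows `S⁺(y) ≥ #{zeros of y} + #{adjacent entries of y of opposite signs}`, so (a)
forces `A x` to vanish exactly on `f₁, …, f_r` and to keep one sign on the rows `0, …, f₀`, with
`S⁺(A x) = S⁻(x) = r`. The induction hypothesis gives the first nonzero entry of `x` the sign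
`ε_r`, so by (b) that sign is `ε_r ε_{r+1} ε_r = ε_{r+1}`.
-/

open Matrix Filter

/-- Number of sign changes in a list of reals (consecutive pairs with negative product). -/
noncomputable def signChanges (l : List ℝ) : ℕ :=
  (l.zip l.tail).countP (fun p => decide (p.1 * p.2 < 0))

/-- `S^-(v)`: sign changes of the coordinates of `v` after discarding zero entries. -/
noncomputable def Sm {n : ℕ} (v : Fin n → ℝ) : ℕ :=
  signChanges ((List.ofFn v).filter (fun x => decide (x ≠ 0)))

/-- `S^+(v)`: maximal number of sign changes over all ±1 completions of the zero
entries of `v`, with the convention `S^+(0) = n`. -/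
noncomputable def Sp {n : ℕ} (v : Fin n → ℝ) : ℕ :=
  if v = 0 then n
  else Finset.univ.sup (fun σ : Fin n → Bool =>
    signChanges (List.ofFn (fun i => if v i = 0 then (if σ i then (1:ℝ) else -1) else v i)))

/-- First nonzero entry of a vector (`0` if the vector is zero). -/
noncomputable def firstNz {n : ℕ} (v : Fin n → ℝ) : ℝ :=
  ((List.ofFn v).filter (fun x => decide (x ≠ 0))).headI

/-- `A` is strictly sign regular with sign pattern `ε`:
every `r × r` minor (`1 ≤ r ≤ min m n`) is nonzero with sign `ε r`. -/
def ssrPattern {m n : ℕ} (A : Matrix (Fin m) (Fin n) ℝ) (ε : ℕ → ℝ) : Prop :=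
  ∀ r : ℕ, 1 ≤ r → r ≤ min m n → ∀ (f : Fin r → Fin m) (g : Fin r → Fin n),
    StrictMono f → StrictMono g → 0 < ε r * (A.submatrix f g).det

/-- `A` is sign regular with sign pattern `ε`:
every nonzero `r × r` minor (`1 ≤ r ≤ min m n`) has sign `ε r`. -/
def srPattern {m n : ℕ} (A : Matrix (Fin m) (Fin n) ℝ) (ε : ℕ → ℝ) : Prop :=
  ∀ r : ℕ, 1 ≤ r → r ≤ min m n → ∀ (f : Fin r → Fin m) (g : Fin r → Fin n),
    StrictMono f → StrictMono g → 0 ≤ ε r * (A.submatrix f g).det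

/-- The map `f` picks out consecutive indices. -/
def Contig {r m : ℕ} (f : Fin r → Fin m) : Prop :=
  ∃ a : ℕ, ∀ i : Fin r, (f i : ℕ) = a + (i : ℕ)

open Finset

lemma signChanges_cons_cons (a b : ℝ) (l : List ℝ) :
    signChanges (a :: b :: l) = signChanges (b :: l) + if a * b < 0 then 1 else 0 := by
  simp only [signChanges, List.tail_cons, List.zip_cons_cons, List.countP_cons, decide_eq_true_eq]

lemma signChanges_cons (a : ℝ) (l : List ℝ) :
    signChanges (a :: l) = signChanges l + if a * l.headI < 0 then 1 else 0 := by
  cases l with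
  | nil => simp [signChanges, show (default : ℝ) = 0 from rfl]
  | cons b t => exact signChanges_cons_cons a b t

lemma signChanges_le_signChanges_cons (a : ℝ) (l : List ℝ) :
    signChanges l ≤ signChanges (a :: l) := by
  rw [signChanges_cons]
  omega

lemma signChanges_le_length_sub_one (l : List ℝ) : signChanges l ≤ l.length - 1 :=
  List.countP_le_length.trans (by simp)

lemma not_mul_lt_zero_of_signChanges_eq_zero {l : List ℝ} (h : signChanges l = 0) (i : ℕ)
    (hi : i + 1 < l.length) : ¬ l[i] * l[i + 1] < 0 := by
  have hmem : (l[i], l[i + 1]) ∈ l.zip l.tail := by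
    have hi' : i < (l.zip l.tail).length := by simp only [List.length_zip, List.length_tail]; omega
    convert List.getElem_mem hi' using 1
    simp [List.getElem_zip, List.getElem_tail]
  simpa using List.countP_eq_zero.1 h _ hmem

lemma List.length_filter_ofFn {α : Type*} {N : ℕ} (v : Fin N → α) (p : α → Bool) :
    ((List.ofFn v).filter p).length = #{i | p (v i)} := by
  induction N with
  | zero => simp
  | succ N ih =>
    rw [List.ofFn_succ, List.filter_cons, Fin.card_filter_univ_succ]
    split_ifs <;> simp [ih]

lemma zero_lt_mul_trans {a b c : ℝ} (hab : 0 < a * b) (hbc : 0 < b * c) : 0 < a * c := by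
  have h := mul_pos hab hbc
  rw [show a * b * (b * c) = a * c * (b * b) by ring] at h
  exact pos_of_mul_pos_left h (mul_self_nonneg b)

lemma Real.sign_eq_iff_zero_lt_mul {e t : ℝ} (he : e = 1 ∨ e = -1) :
    Real.sign t = e ↔ 0 < e * t := by
  rcases he with rfl | rfl <;> rcases lt_trichotomy t 0 with ht | ht | ht <;>
    simp [Real.sign_of_neg, Real.sign_of_pos, ht] <;> constructor <;> intro h <;> linarith

section Vectors

variable {N : ℕ}

lemma Sm_le_card_support_sub_one (v : Fin N → ℝ) : Sm v ≤ #{i | v i ≠ 0} - 1 := by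
  have := signChanges_le_length_sub_one ((List.ofFn v).filter (fun x => decide (x ≠ 0)))
  rw [List.length_filter_ofFn] at this
  unfold Sm
  convert this using 3
  simp

lemma firstNz_eq {v : Fin N → ℝ} {j : Fin N} (hj : v j ≠ 0) (hlt : ∀ k < j, v k = 0) :
    firstNz v = v j := by
  unfold firstNz
  rw [← List.take_append_drop j (List.ofFn v), List.filter_append,
    List.filter_eq_nil_iff.2, List.nil_append, List.drop_eq_getElem_cons (by simp),
    List.filter_cons_of_pos (by simpa using hj)]
  · simp
  · intro a ha
    obtain ⟨k, hk, rfl⟩ := List.getElem_of_mem ha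
    simp only [List.length_take, List.length_ofFn] at hk
    simpa using hlt ⟨k, by omega⟩ (Fin.mk_lt_of_lt_val (by omega))

lemma zero_lt_mul_of_signChanges_eq_zero {v : Fin N → ℝ} (h : signChanges (List.ofFn v) = 0)
    (j : Fin N) (hnz : ∀ k ≤ j, v k ≠ 0) : 0 < v ⟨0, j.pos⟩ * v j := by
  obtain ⟨j, hj⟩ := j
  induction j with
  | zero => exact mul_self_pos.2 (hnz _ le_rfl)
  | succ k ih =>
    have hprev := ih (by omega) fun l hl => hnz l (hl.trans (Fin.mk_le_mk.2 (by omega)))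
    have hstep := not_mul_lt_zero_of_signChanges_eq_zero h k (by simpa using hj)
    simp only [List.getElem_ofFn] at hstep
    have hk : v ⟨k, by omega⟩ ≠ 0 := hnz _ (Fin.mk_le_mk.2 (by omega))
    have hk1 : v ⟨k + 1, hj⟩ ≠ 0 := hnz _ le_rfl
    exact zero_lt_mul_trans hprev ((not_lt.1 hstep).lt_of_ne (mul_ne_zero hk hk1).symm)

noncomputable def signCompletion (v : Fin N → ℝ) (σ : Fin N → Bool) : Fin N → ℝ :=
  fun i => if v i = 0 then (if σ i then 1 else -1) else v i

lemma signCompletion_ne_zero {v : Fin N → ℝ} (σ : Fin N → Bool) (i : Fin N) :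
    signCompletion v σ i ≠ 0 := by
  unfold signCompletion
  split_ifs <;> norm_num [*]

lemma signCompletion_of_ne_zero {v : Fin N → ℝ} (σ : Fin N → Bool) {i : Fin N} (hi : v i ≠ 0) :
    signCompletion v σ i = v i :=
  if_neg hi

lemma signCompletion_succ (v : Fin (N + 1) → ℝ) (b : Bool) (σ : Fin N → Bool) :
    (fun i => signCompletion v (Fin.cons b σ) i.succ) = signCompletion (fun i => v i.succ) σ :=
  rfl

lemma signChanges_signCompletion_le_Sp {v : Fin N → ℝ} (hv : v ≠ 0) (σ : Fin N → Bool) :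
    signChanges (List.ofFn (signCompletion v σ)) ≤ Sp v := by
  rw [Sp, if_neg hv]
  exact le_sup (f := fun σ => signChanges (List.ofFn (signCompletion v σ))) (mem_univ σ)

lemma exists_Sm_eq_Sp {v : Fin N → ℝ} (hv : v ≠ 0) :
    ∃ w : Fin N → ℝ, (∀ i, v i ≠ 0 → w i = v i) ∧ (∀ i, w i ≠ 0) ∧ Sm w = Sp v := by
  obtain ⟨σ, -, hσ⟩ := exists_max_image univ
    (fun σ => signChanges (List.ofFn (signCompletion v σ))) univ_nonempty
  have hfilter : (List.ofFn (signCompletion v σ)).filter (fun x => decide (x ≠ 0))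
      = List.ofFn (signCompletion v σ) :=
    List.filter_eq_self.2 (by simp [List.mem_ofFn, signCompletion_ne_zero])
  refine ⟨signCompletion v σ, fun i => signCompletion_of_ne_zero σ, signCompletion_ne_zero σ,
    le_antisymm ?_ ?_⟩
  · rw [Sm, hfilter]
    exact signChanges_signCompletion_le_Sp hv σ
  · rw [Sp, if_neg hv, Sm, hfilter]
    exact Finset.sup_le fun τ _ => hσ τ (mem_univ τ)

/-- Filling each zero with the sign opposite to its left neighbour (the seed `s` for the first
entry) makes every zero contribute a sign change. -/
lemma exists_signCompletion_cons (v : Fin N → ℝ) {s : ℝ} (hs : s ≠ 0) :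
    ∃ σ, signChanges (s :: List.ofFn v) + #{i | v i = 0}
      ≤ signChanges (s :: List.ofFn (signCompletion v σ)) := by
  induction N generalizing s with
  | zero => exact ⟨finZeroElim, by simp⟩
  | succ N ih =>
    simp only [List.ofFn_succ, signChanges_cons_cons, Fin.card_filter_univ_succ]
    by_cases h0 : v 0 = 0
    · set c : ℝ := if s < 0 then 1 else -1
      have hsc : s * c < 0 := by
        rcases hs.lt_or_gt with h | h <;> simp [c, h, h.not_gt]
      obtain ⟨σ, hσ⟩ := ih (fun i => v i.succ) (s := c) (right_ne_zero_of_mul hsc.ne)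
      refine ⟨Fin.cons (decide (s < 0)) σ, ?_⟩
      have hc0 : signCompletion v (Fin.cons (decide (s < 0)) σ) 0 = c := by
        simp [signCompletion, h0, c]
      have := signChanges_le_signChanges_cons c (List.ofFn fun i => v i.succ)
      rw [hc0, signCompletion_succ, if_pos hsc, if_pos h0, h0, signChanges_cons]
      simp only [zero_mul, mul_zero, lt_irrefl, if_false]
      omega
    · obtain ⟨σ, hσ⟩ := ih (fun i => v i.succ) h0
      refine ⟨Fin.cons false σ, ?_⟩
      rw [signCompletion_of_ne_zero _ h0, signCompletion_succ, if_neg h0]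
      omega

lemma exists_signCompletion {v : Fin N → ℝ} (hv : v ≠ 0) :
    ∃ σ, signChanges (List.ofFn v) + #{i | v i = 0}
      ≤ signChanges (List.ofFn (signCompletion v σ)) := by
  induction N with
  | zero => exact absurd (Subsingleton.elim _ _) hv
  | succ N ih =>
    simp only [List.ofFn_succ, Fin.card_filter_univ_succ]
    by_cases h0 : v 0 = 0
    · have htail : (fun i : Fin N => v i.succ) ≠ 0 := by
        contrapose! hv
        exact funext (Fin.cases h0 (congrFun hv))
      obtain ⟨σ, hσ⟩ := ih htail
      obtain ⟨C, hCdef⟩ : ∃ C, List.ofFn (signCompletion (fun i => v i.succ) σ) = C := ⟨_, rfl⟩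
      rw [hCdef] at hσ
      have hC : C.headI ≠ 0 := by
        cases N with
        | zero => exact absurd (Subsingleton.elim _ _) htail
        | succ N => simp [← hCdef, List.ofFn_succ, signCompletion_ne_zero]
      -- a leading zero takes the sign opposite to the completed entry after it
      refine ⟨Fin.cons (decide (C.headI < 0)) σ, ?_⟩
      have hc0 : signCompletion v (Fin.cons (decide (C.headI < 0)) σ) 0 * C.headI < 0 := by
        rcases hC.lt_or_gt with h | h <;> simp [signCompletion, h0, h, h.not_gt]
      rw [signCompletion_succ, hCdef, signChanges_cons, signChanges_cons, if_pos hc0, if_pos h0,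
        h0]
      simp only [zero_mul, lt_irrefl, if_false]
      omega
    · obtain ⟨σ, hσ⟩ := exists_signCompletion_cons (fun i => v i.succ) h0
      refine ⟨Fin.cons false σ, ?_⟩
      rw [signCompletion_of_ne_zero _ h0, signCompletion_succ, if_neg h0]
      exact hσ

lemma signChanges_add_card_zero_le_Sp {v : Fin N → ℝ} (hv : v ≠ 0) :
    signChanges (List.ofFn v) + #{i | v i = 0} ≤ Sp v := by
  obtain ⟨σ, hσ⟩ := exists_signCompletion hv
  exact hσ.trans (signChanges_signCompletion_le_Sp hv σ)

lemma Sp_eq_card_of_Sp_le_card {v : Fin N → ℝ} (hv : v ≠ 0) {Z : Finset (Fin N)}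
    (hZ : ∀ i ∈ Z, v i = 0) (hSp : Sp v ≤ #Z) :
    Sp v = #Z ∧ (∀ i ∉ Z, v i ≠ 0) ∧ signChanges (List.ofFn v) = 0 := by
  have hsub : Z ⊆ ({i | v i = 0} : Finset _) := fun i hi => mem_filter.2 ⟨mem_univ i, hZ i hi⟩
  have hcount := signChanges_add_card_zero_le_Sp hv
  have hcard := card_le_card hsub
  have hzeros : ({i | v i = 0} : Finset _) = Z := (eq_of_subset_of_card_le hsub (by omega)).symm
  refine ⟨by omega, fun i hi h => hi ?_, by omega⟩
  exact hzeros ▸ mem_filter.2 ⟨mem_univ i, h⟩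

end Vectors

section CofactorVec

variable {R : Type*} [CommRing R] {m n r : ℕ}

noncomputable def cofactorVec (A : Matrix (Fin m) (Fin n) R) (γ : Fin r → Fin m)
    (g : Fin (r + 1) → Fin n) : Fin n → R :=
  ∑ k : Fin (r + 1), ((-1) ^ (k : ℕ) * (A.submatrix γ (g ∘ k.succAbove)).det) • Pi.single (g k) 1

variable (A : Matrix (Fin m) (Fin n) R) (γ : Fin r → Fin m) {g : Fin (r + 1) → Fin n}

lemma mulVec_cofactorVec (g : Fin (r + 1) → Fin n) (i : Fin m) :
    (A *ᵥ cofactorVec A γ g) i = (A.submatrix (Fin.cons i γ) g).det := by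
  rw [det_succ_row_zero, cofactorVec, mulVec_sum]
  simp only [mulVec_smul, mulVec_single, MulOpposite.op_one, one_smul, Finset.sum_apply,
    Pi.smul_apply, col_apply, smul_eq_mul, submatrix_apply, Fin.cons_zero, submatrix_submatrix,
    Fin.cons_comp_succ]
  exact sum_congr rfl fun k _ => by ring

lemma mulVec_cofactorVec_comp_eq_zero (g : Fin (r + 1) → Fin n) (t : Fin r) :
    (A *ᵥ cofactorVec A γ g) (γ t) = 0 := by
  rw [mulVec_cofactorVec]
  exact det_zero_of_row_eq (Fin.succ_ne_zero t).symm (by ext; simp)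

lemma cofactorVec_apply (hg : g.Injective) (k : Fin (r + 1)) :
    cofactorVec A γ g (g k) = (-1) ^ (k : ℕ) * (A.submatrix γ (g ∘ k.succAbove)).det := by
  simp [cofactorVec, Finset.sum_apply, Pi.single_apply, hg.eq_iff]

lemma cofactorVec_eq_zero {j : Fin n} (hj : j ∉ Set.range g) : cofactorVec A γ g j = 0 := by
  simp only [cofactorVec, Finset.sum_apply, Pi.smul_apply, Pi.single_apply, smul_eq_mul, mul_ite,
    mul_one, mul_zero]
  exact sum_eq_zero fun k _ => if_neg fun h => hj ⟨k, h.symm⟩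

lemma cofactorVec_ne_zero (hg : g.Injective) {k : Fin (r + 1)}
    (hk : (A.submatrix γ (g ∘ k.succAbove)).det ≠ 0) : cofactorVec A γ g ≠ 0 := fun h => by
  have := cofactorVec_apply A γ hg k
  rw [h, Pi.zero_apply, eq_comm, (isUnit_neg_one.pow _).mul_right_eq_zero] at this
  exact hk this

end CofactorVec

lemma Sm_cofactorVec_le {m n r : ℕ} (A : Matrix (Fin m) (Fin n) ℝ) (γ : Fin r → Fin m)
    (g : Fin (r + 1) → Fin n) : Sm (cofactorVec A γ g) ≤ r := by
  have hsupp : ({j | cofactorVec A γ g j ≠ 0} : Finset _) ⊆ univ.image g := fun j hj => by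
    by_contra h
    exact (mem_filter.1 hj).2 (cofactorVec_eq_zero A γ (by simpa using h))
  have := (card_le_card hsupp).trans card_image_le
  have := Sm_le_card_support_sub_one (cofactorVec A γ g)
  simp only [card_univ, Fintype.card_fin] at *
  omega

lemma firstNz_cofactorVec {m n r : ℕ} (A : Matrix (Fin m) (Fin n) ℝ) (γ : Fin r → Fin m)
    {g : Fin (r + 1) → Fin n} (hg : StrictMono g)
    (h0 : (A.submatrix γ (g ∘ (0 : Fin (r + 1)).succAbove)).det ≠ 0) :
    firstNz (cofactorVec A γ g) = (A.submatrix γ (g ∘ (0 : Fin (r + 1)).succAbove)).det := by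
  have hx0 := cofactorVec_apply A γ hg.injective 0
  rw [Fin.val_zero, pow_zero, one_mul] at hx0
  rw [firstNz_eq (hx0 ▸ h0), hx0]
  intro k hk
  refine cofactorVec_eq_zero A γ ?_
  rintro ⟨l, rfl⟩
  exact (hg.monotone (Fin.zero_le l)).not_gt hk

def VariationDiminishing {m n : ℕ} (A : Matrix (Fin m) (Fin n) ℝ) : Prop :=
  ∀ x : Fin n → ℝ, x ≠ 0 → Sp (A *ᵥ x) ≤ Sm x

-- condition (b) of the theorem
def FirstSignCondition {m n : ℕ} (A : Matrix (Fin m) (Fin n) ℝ) (ε : ℕ → ℝ) : Prop :=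
  ∀ x : Fin n → ℝ, A *ᵥ x ≠ 0 → ∀ r : ℕ, r ≤ min m n - 1 →
    Sp (A *ᵥ x) = r → Sm x = r →
    ∀ w : Fin m → ℝ, (∀ i, (A *ᵥ x) i ≠ 0 → w i = (A *ᵥ x) i) → (∀ i, w i ≠ 0) →
      Sm w = Sp (A *ᵥ x) →
      ∀ i0 : Fin m, (i0 : ℕ) = 0 →
        Real.sign (w i0) = ε r * ε (r + 1) * Real.sign (firstNz x)

theorem zero_lt_mul_det_of_minors {m n r : ℕ} {A : Matrix (Fin m) (Fin n) ℝ} {ε : ℕ → ℝ}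
    (hsv : ∀ r, ε r = 1 ∨ ε r = -1) (ha : VariationDiminishing A) (hb : FirstSignCondition A ε)
    (ih : ∀ (f : Fin r → Fin m) (g : Fin r → Fin n), StrictMono f → StrictMono g →
      0 < ε r * (A.submatrix f g).det)
    {f : Fin (r + 1) → Fin m} {g : Fin (r + 1) → Fin n} (hf : StrictMono f) (hg : StrictMono g) :
    0 < ε (r + 1) * (A.submatrix f g).det := by
  set γ : Fin r → Fin m := Fin.tail f
  have hγ : StrictMono γ := hf.comp Fin.strictMono_succ
  have hminor : 0 < ε r * (A.submatrix γ (g ∘ (0 : Fin (r + 1)).succAbove)).det :=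
    ih _ _ hγ (hg.comp (Fin.strictMono_succAbove 0))
  have hminor_ne := right_ne_zero_of_mul hminor.ne'
  have hx := cofactorVec_ne_zero A γ hg.injective hminor_ne
  have hm : r + 1 ≤ m := by simpa using Fintype.card_le_of_injective f hf.injective
  have hn : r + 1 ≤ n := by simpa using Fintype.card_le_of_injective g hg.injective
  have hSmx := Sm_cofactorVec_le A γ g
  have hSp := ha _ hx
  have hy : A *ᵥ cofactorVec A γ g ≠ 0 := fun h => by
    rw [h, Sp, if_pos rfl] at hSp
    omega
  obtain ⟨hSpy, hnz, hchanges⟩ := Sp_eq_card_of_Sp_le_card hy (Z := univ.image γ)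
    (by simpa using mulVec_cofactorVec_comp_eq_zero A γ g)
    (by rw [card_image_of_injective _ hγ.injective, card_fin]; omega)
  rw [card_image_of_injective _ hγ.injective, card_fin] at hSpy
  have hnz' : ∀ i ≤ f 0, (A *ᵥ cofactorVec A γ g) i ≠ 0 := fun i hi => hnz i (by
    simp only [mem_image, mem_univ, true_and, not_exists]
    exact fun t ht => (hi.trans_lt (hf (Fin.succ_pos t))).ne' ht)
  obtain ⟨w, hwy, hw, hSmw⟩ := exists_Sm_eq_Sp hy
  have hsign := hb _ hy r (by omega) hSpy (by omega) w hwy hw hSmw ⟨0, by omega⟩ rfl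
  rw [hwy _ (hnz' _ (Fin.le_def.2 (Nat.zero_le _))), firstNz_cofactorVec A γ hg hminor_ne,
    (Real.sign_eq_iff_zero_lt_mul (hsv r)).2 hminor, mul_right_comm,
    show ε r * ε r = 1 by rcases hsv r with h | h <;> rw [h] <;> norm_num, one_mul,
    Real.sign_eq_iff_zero_lt_mul (hsv (r + 1))] at hsign
  have hchain := zero_lt_mul_of_signChanges_eq_zero hchanges (f 0) hnz'
  rw [mulVec_cofactorVec A γ g (f 0), Fin.cons_self_tail] at hchain
  exact zero_lt_mul_trans hsign hchain

theorem zero_lt_mul_det_submatrix {m n : ℕ} {A : Matrix (Fin m) (Fin n) ℝ} {ε : ℕ → ℝ}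
    (hε0 : ε 0 = 1) (hsv : ∀ r, ε r = 1 ∨ ε r = -1) (ha : VariationDiminishing A)
    (hb : FirstSignCondition A ε) (r : ℕ) (f : Fin r → Fin m) (g : Fin r → Fin n)
    (hf : StrictMono f) (hg : StrictMono g) : 0 < ε r * (A.submatrix f g).det := by
  induction r with
  | zero => simp [hε0]
  | succ r ih => exact zero_lt_mul_det_of_minors hsv ha hb (fun f g => ih f g) hf hg

theorem stmt5 {m n : ℕ} (A : Matrix (Fin m) (Fin n) ℝ) (ε : ℕ → ℝ)
    (hε0 : ε 0 = 1) (hsv : ∀ r, ε r = 1 ∨ ε r = -1)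
    (ha : ∀ x : Fin n → ℝ, x ≠ 0 → Sp (A *ᵥ x) ≤ Sm x)
    (hb : ∀ x : Fin n → ℝ, A *ᵥ x ≠ 0 → ∀ r : ℕ, r ≤ min m n - 1 →
      Sp (A *ᵥ x) = r → Sm x = r →
      ∀ w : Fin m → ℝ, (∀ i, (A *ᵥ x) i ≠ 0 → w i = (A *ᵥ x) i) → (∀ i, w i ≠ 0) →
        Sm w = Sp (A *ᵥ x) →
        ∀ i0 : Fin m, (i0 : ℕ) = 0 →
          Real.sign (w i0) = ε r * ε (r + 1) * Real.sign (firstNz x)) :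
    ssrPattern A ε :=
  fun r _ _ => zero_lt_mul_det_submatrix hε0 hsv ha hb r
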